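/- arXiv:2205.02374 — 3 statements merged into one kernel-verified Lean document; each statement's English description precedes it below -/
import Mathlib

section
/- (Upper bound for Hamming weight) For all integers n ≥ k ≥ 1, the k-composition complexity of the Hamming weight function satisfies CC_k(HW_n) ≤ ⌈n/k⌉ · ⌈log₂(k+1)⌉; in particular CC_k(HW_n) ≤ O((n/k) · log k) for k ≥ 2. -/
/-- The Hamming weight of `x ∈ {0,1}^n`: the number of coordinates equal to `1`. -/
def hw (n : ℕ) (x : Fin n → Bool) : ℕ := (Finset.univ.filter (fun i => x i = true)).card

/-- The majority function `Maj_n`: outputs `1` iff the Hamming weight is at least `n/2`. -/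
def maj (n : ℕ) (x : Fin n → Bool) : Bool := decide (n ≤ 2 * hw n x)

/-- `g : {0,1}^n → {0,1}` is `k`-local if it depends on at most `k` coordinates. -/
def IsKLocal {n : ℕ} (k : ℕ) (g : (Fin n → Bool) → Bool) : Prop :=
  ∃ I : Finset (Fin n), I.card ≤ k ∧
    ∀ x y : Fin n → Bool, (∀ i ∈ I, x i = y i) → g x = g y

/-- The `k`-composition complexity of `f : {0,1}^n → D`: the least `m` such that
`f = h(g_1, …, g_m)` with each `g_j` being `k`-local. -/
noncomputable def CCk {n : ℕ} {D : Type*} (k : ℕ) (f : (Fin n → Bool) → D) : ℕ :=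
  sInf {m : ℕ | ∃ (g : Fin m → (Fin n → Bool) → Bool) (h : (Fin m → Bool) → D),
    (∀ j, IsKLocal k (g j)) ∧ ∀ x, f x = h (fun j => g j x)}

/-! Split the `n` coordinates into `⌈n/k⌉` blocks of at most `k` consecutive coordinates. The
Hamming weight of `x` restricted to one block is a number in `{0, …, k}`, which depends on `k`
coordinates only and is therefore described by `⌈log₂(k+1)⌉` bits, each a `k`-local function;
the sum of the decoded block weights is `|x|`. The asymptotic form follows from
`⌈t⌉ ≤ 2t` for `t ≥ 1/2` and `log₂(k+1) ≤ 2 log₂ k` for `k ≥ 2`. -/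

open Finset Function Real

theorem CCk_le_mul_of_factorization {n k q b : ℕ} {α D : Type*} [Fintype α] [Nonempty α]
    (hα : Fintype.card α ≤ 2 ^ b)
    {f : (Fin n → Bool) → D} (W : Fin q → (Fin n → Bool) → α)
    (hW : ∀ j, ∃ I : Finset (Fin n), #I ≤ k ∧ DependsOn (W j) I)
    (F : (Fin q → α) → D) (hf : ∀ x, f x = F fun j => W j x) :
    CCk k f ≤ q * b := by
  obtain ⟨e⟩ := Embedding.nonempty_of_card_le (α := α) (β := Fin b → Bool) (by simpa using hα)
  refine Nat.sInf_le ⟨fun p x => e (W (finProdFinEquiv.symm p).1 x) (finProdFinEquiv.symm p).2,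
    fun v => F fun j => invFun e fun t => v (finProdFinEquiv (j, t)), fun p => ?_, fun x => ?_⟩
  · obtain ⟨I, hI, hdep⟩ := hW (finProdFinEquiv.symm p).1
    exact ⟨I, hI, fun x y hxy => by simp only [hdep hxy]⟩
  · simp [hf x, leftInverse_invFun e.injective _]

section Blocks

variable {n k : ℕ}

def block (n k j : ℕ) : Finset (Fin n) := {i | (i : ℕ) / k = j}

theorem card_block_le (hk : 0 < k) (j : ℕ) : #(block n k j) ≤ k := by
  calc #(block n k j) = #((block n k j).map Fin.valEmbedding) := (card_map _).symm
    _ ≤ #(Ico (j * k) (j * k + k)) := card_le_card fun m hm => by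
        obtain ⟨i, hi, rfl⟩ := mem_map.1 hm
        simp only [block, mem_filter, mem_univ, true_and] at hi
        subst hi
        simp only [Fin.valEmbedding_apply, mem_Ico]
        exact ⟨Nat.div_mul_le_self _ _, by linarith [Nat.lt_div_mul_add hk (a := i)]⟩
    _ = k := by simp

theorem dependsOn_card_filter (s : Finset (Fin n)) :
    DependsOn (fun x : Fin n → Bool => #{i ∈ s | x i = true}) s :=
  fun _ _ hxy => congrArg card (filter_congr fun i hi => by rw [hxy i hi])

theorem hw_eq_sum_card_block {q : ℕ} (hk : 0 < k) (hq : n ≤ q * k) (x : Fin n → Bool) :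
    hw n x = ∑ j : Fin q, #{i ∈ block n k j | x i = true} := by
  rw [Fin.sum_univ_eq_sum_range (fun j => #{i ∈ block n k j | x i = true}), hw,
    card_eq_sum_card_fiberwise (f := fun i : Fin n => (i : ℕ) / k) (t := range q)]
  · refine sum_congr rfl fun j _ => ?_
    simp only [block, filter_filter]
    congr 1; ext i; simp [and_comm]
  · intro i _
    exact mem_range.2 ((Nat.div_lt_iff_lt_mul hk).2 (i.isLt.trans_le hq))

end Blocks

theorem CCk_hw_le {n k q b : ℕ} (hk : 0 < k) (hq : n ≤ q * k) (hb : k + 1 ≤ 2 ^ b) :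
    CCk k (hw n) ≤ q * b :=
  CCk_le_mul_of_factorization (α := Fin (k + 1)) (by simpa using hb)
    (fun j x => ⟨#{i ∈ block n k j | x i = true},
      Nat.lt_succ_of_le (card_filter_le _ _ |>.trans (card_block_le hk j))⟩)
    (fun j => ⟨block n k j, card_block_le hk j,
      fun _ _ hxy => Fin.ext (dependsOn_card_filter _ hxy)⟩)
    (fun w => ∑ j, (w j : ℕ)) (hw_eq_sum_card_block hk hq)

theorem le_natCeil_div_mul (n : ℕ) {k : ℕ} (hk : 0 < k) : n ≤ ⌈(n : ℝ) / k⌉₊ * k := by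
  have h := Nat.le_ceil ((n : ℝ) / k)
  rw [div_le_iff₀ (by positivity)] at h
  exact_mod_cast h

theorem succ_le_two_pow_natCeil_logb (k : ℕ) : k + 1 ≤ 2 ^ ⌈logb 2 ((k : ℝ) + 1)⌉₊ := by
  have := natCeil_logb_natCast 2 (k + 1)
  push_cast at this
  rw [this]
  exact Nat.le_pow_clog one_lt_two _

theorem logb_add_one_le_two_mul_logb {b x : ℝ} (hb : 1 < b) (hx : 2 ≤ x) :
    logb b (x + 1) ≤ 2 * logb b x := by
  calc logb b (x + 1) ≤ logb b (x ^ 2) := logb_le_logb_of_le hb (by linarith) (by nlinarith)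
    _ = 2 * logb b x := by rw [logb_pow]; push_cast; ring

/-- Upper bound for Hamming weight: `CC_k(HW_n) ≤ ⌈n/k⌉ ⬝ ⌈log₂(k+1)⌉`;
in particular `CC_k(HW_n) = O((n/k) log k)` for `k ≥ 2`. -/
theorem hw_upper_bound :
    ∃ C : ℝ, 0 < C ∧
      ∀ n k : ℕ, 1 ≤ k → k ≤ n →
        CCk k (hw n) ≤ ⌈(n : ℝ) / (k : ℝ)⌉₊ * ⌈Real.logb 2 ((k : ℝ) + 1)⌉₊ ∧
        (2 ≤ k → (CCk k (hw n) : ℝ) ≤ C * ((n : ℝ) / (k : ℝ)) * Real.logb 2 (k : ℝ)) := by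
  refine ⟨8, by norm_num, fun n k hk hkn => ?_⟩
  have hCC := CCk_hw_le hk (le_natCeil_div_mul n hk) (succ_le_two_pow_natCeil_logb k)
  refine ⟨hCC, fun hk2 => ?_⟩
  have hk2' : (2 : ℝ) ≤ k := by exact_mod_cast hk2
  have hnk : 1 ≤ (n : ℝ) / k := by
    rw [one_le_div (by positivity)]; exact_mod_cast hkn
  have hlog : 1 ≤ logb 2 ((k : ℝ) + 1) := by
    simpa [logb_self_eq_one one_lt_two] using
      logb_le_logb_of_le one_lt_two zero_lt_two (show (2 : ℝ) ≤ k + 1 by linarith)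
  calc (CCk k (hw n) : ℝ) ≤ ⌈(n : ℝ) / k⌉₊ * ⌈logb 2 ((k : ℝ) + 1)⌉₊ := by exact_mod_cast hCC
    _ ≤ (2 * ((n : ℝ) / k)) * (2 * logb 2 ((k : ℝ) + 1)) := by
      gcongr <;> exact Nat.ceil_le_two_mul (by linarith)
    _ ≤ (2 * ((n : ℝ) / k)) * (2 * (2 * logb 2 (k : ℝ))) := by
      gcongr; exact logb_add_one_le_two_mul_logb one_lt_two hk2'
    _ = 8 * ((n : ℝ) / k) * logb 2 k := by ring
end

section
/- There exists a constant C > 0 such that the following holds. Suppose HW_n(x) = h(g_1(x), …, g_m(x)) for all x ∈ {0,1}^n, where g_1, …, g_m : {0,1}^n → {0,1} and h : {0,1}^m → {0, …, n}, and suppose that for every coordinate i ∈ [n], at most q of the inner functions g_1, …, g_m depend on coordinate i. Then m ≥ n · 2^(−C·q). -/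
/-- `x^{⊕i}`: `x` with its `i`-th coordinate flipped. -/
def flipBit {n : ℕ} (i : Fin n) (x : Fin n → Bool) : Fin n → Bool :=
  Function.update x i (!x i)

/-- `g` depends on coordinate `i` if flipping that coordinate can change its output. -/
def DependsOnCoord {n : ℕ} (g : (Fin n → Bool) → Bool) (i : Fin n) : Prop :=
  ∃ x, g x ≠ g (flipBit i x)

/-- The Shannon entropy (base 2) of the random variable `A : Ω → α`, where the underlying
sample point is drawn uniformly from the finite set `S`.  (The convention `0 ⬝ log₂ 0 = 0`
holds automatically since `Real.logb 2 0 = 0`.) -/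
noncomputable def entU {Ω α : Type*} [Fintype α] [DecidableEq α]
    (S : Finset Ω) (A : Ω → α) : ℝ :=
  ∑ a : α,
    (((S.filter (fun ω => A ω = a)).card : ℝ) / (S.card : ℝ)) *
      Real.logb 2 ((((S.filter (fun ω => A ω = a)).card : ℝ) / (S.card : ℝ)))⁻¹

/-- The conditional Shannon entropy (base 2) `H[A | B]` of `A : Ω → α` given `B : Ω → β`,
where the sample point is uniform on the finite set `S`.  Each term is
`P(a, b) ⬝ log₂ (1 / P(a | b))`, and `1 / P(a | b) = P(b) / P(a, b)`. -/
noncomputable def condEntU {Ω α β : Type*} [Fintype α] [DecidableEq α]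
    [Fintype β] [DecidableEq β] (S : Finset Ω) (A : Ω → α) (B : Ω → β) : ℝ :=
  ∑ a : α, ∑ b : β,
    (((S.filter (fun ω => A ω = a ∧ B ω = b)).card : ℝ) / (S.card : ℝ)) *
      Real.logb 2 (((S.filter (fun ω => B ω = b)).card : ℝ) /
        ((S.filter (fun ω => A ω = a ∧ B ω = b)).card : ℝ))

/-- The mutual information (base 2) `I[A : B] = H[A] − H[A | B]`, where the sample point is
uniform on the finite set `S`. -/
noncomputable def mutInfoU {Ω α β : Type*} [Fintype α] [DecidableEq α]
    [Fintype β] [DecidableEq β] (S : Finset Ω) (A : Ω → α) (B : Ω → β) : ℝ :=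
  entU S A - condEntU S A B

open Finset

attribute [local instance] Classical.propDecidable

noncomputable section
variable {n m : ℕ}

def Gv (g : Fin m → (Fin n → Bool) → Bool) (x : Fin n → Bool) : Fin m → Bool := fun j => g j x

def Aset (g : Fin m → (Fin n → Bool) → Bool) (i : Fin n) (v : Fin m → Bool) :
    Finset (Fin m → Bool) :=
  (univ.image (Gv g)).filter (fun v' => ∀ j, ¬ DependsOnCoord (g j) i → v' j = v j)

def Phi (g : Fin m → (Fin n → Bool) → Bool) (h : (Fin m → Bool) → ℕ) (i : Fin n)
    (v : Fin m → Bool) : ℕ :=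
  (((Aset g i v).image h).filter (fun c => c ≤ h v)).card

lemma phi_le (g : Fin m → (Fin n → Bool) → Bool) (h : (Fin m → Bool) → ℕ) (i : Fin n) (q : ℕ)
    (hdep : Nat.card {j : Fin m // DependsOnCoord (g j) i} ≤ q) (v : Fin m → Bool) :
    Phi g h i v ≤ 2 ^ q := by
  classical
  have h1 : Phi g h i v ≤ (Aset g i v).card :=
    le_trans (card_filter_le _ _) (card_image_le)
  haveI : Fintype {j : Fin m // DependsOnCoord (g j) i} := Fintype.ofFinite _
  have h2 : (Aset g i v).card ≤ Fintype.card ({j : Fin m // DependsOnCoord (g j) i} → Bool) := by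
    rw [← Finset.card_univ]
    refine card_le_card_of_injOn (fun v' => fun jP : {j : Fin m // DependsOnCoord (g j) i} => v' jP.1)
      (fun _ _ => mem_univ _) ?_
    intro v1 hv1 v2 hv2 heq12
    have hv1' := (mem_filter.mp hv1).2
    have hv2' := (mem_filter.mp hv2).2
    funext j
    by_cases hj : DependsOnCoord (g j) i
    · exact congrFun heq12 ⟨j, hj⟩
    · rw [hv1' j hj, hv2' j hj]
  have h3 : Fintype.card ({j : Fin m // DependsOnCoord (g j) i} → Bool)
      = 2 ^ Fintype.card {j : Fin m // DependsOnCoord (g j) i} := by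
    simp [Fintype.card_fun]
  have h4 : Fintype.card {j : Fin m // DependsOnCoord (g j) i} ≤ q := by
    rwa [Nat.card_eq_fintype_card] at hdep
  exact le_trans h1 (le_trans (h3 ▸ h2) (Nat.pow_le_pow_right (by norm_num) h4))
lemma not_dependsOn {g : (Fin n → Bool) → Bool} {i : Fin n} (hg : ¬ DependsOnCoord g i)
    (x : Fin n → Bool) : g (flipBit i x) = g x := by
  rw [DependsOnCoord] at hg
  push_neg at hg
  exact (hg x).symm

lemma hw_flip (i : Fin n) (x : Fin n → Bool) (hx : x i = false) :
    hw n (flipBit i x) = hw n x + 1 := by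
  classical
  have : (univ.filter (fun k => flipBit i x k = true))
      = insert i (univ.filter (fun k => x k = true)) := by
    ext k
    by_cases hk : k = i
    · subst hk
      simp [flipBit, hx]
    · simp [flipBit, Function.update, hk]
  rw [hw, this, card_insert_of_notMem (by simp [hx]), hw]

lemma phi_step (g : Fin m → (Fin n → Bool) → Bool) (h : (Fin m → Bool) → ℕ) (i : Fin n)
    (heq : ∀ x, hw n x = h (fun j => g j x)) (x : Fin n → Bool) (hx : x i = false) :
    Phi g h i (Gv g x) + 1 ≤ Phi g h i (Gv g (flipBit i x)) := by
  classical
  have hagree : ∀ j, ¬ DependsOnCoord (g j) i → (Gv g (flipBit i x)) j = (Gv g x) j :=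
    fun j hj => not_dependsOn hj x
  have hAeq : Aset g i (Gv g (flipBit i x)) = Aset g i (Gv g x) := by
    unfold Aset
    apply filter_congr
    intro w _
    constructor <;> intro hw' j hj
    · rw [← hagree j hj]; exact hw' j hj
    · rw [hagree j hj]; exact hw' j hj
  have hv : h (Gv g x) = hw n x := (heq x).symm
  have hv' : h (Gv g (flipBit i x)) = hw n x + 1 := by
    have h2 := heq (flipBit i x)
    rw [hw_flip i x hx] at h2
    exact h2.symm
  have hv'A : Gv g (flipBit i x) ∈ Aset g i (Gv g x) :=
    mem_filter.mpr ⟨mem_image.mpr ⟨flipBit i x, mem_univ _, rfl⟩, hagree⟩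
  unfold Phi
  rw [hAeq, hv, hv']
  set S := (Aset g i (Gv g x)).image h with hS
  have hmem : hw n x + 1 ∈ S := mem_image.mpr ⟨Gv g (flipBit i x), hv'A, hv'⟩
  have hsub : insert (hw n x + 1) (S.filter (fun c => c ≤ hw n x))
      ⊆ S.filter (fun c => c ≤ hw n x + 1) := by
    intro c hc
    rcases mem_insert.mp hc with rfl | hc
    · exact mem_filter.mpr ⟨hmem, le_refl _⟩
    · have hc' := mem_filter.mp hc
      exact mem_filter.mpr ⟨hc'.1, hc'.2.trans (Nat.le_succ _)⟩
  have hnotmem : hw n x + 1 ∉ S.filter (fun c => c ≤ hw n x) := by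
    intro hc
    exact absurd (mem_filter.mp hc).2 (by omega)
  calc (S.filter (fun c => c ≤ hw n x)).card + 1
      = (insert (hw n x + 1) (S.filter (fun c => c ≤ hw n x))).card :=
        (card_insert_of_notMem hnotmem).symm
    _ ≤ (S.filter (fun c => c ≤ hw n x + 1)).card := card_le_card hsub

def Nc (g : Fin m → (Fin n → Bool) → Bool) (i : Fin n) (b : Bool) (v : Fin m → Bool) : ℕ :=
  (univ.filter (fun x : Fin n → Bool => x i = b ∧ Gv g x = v)).card

def Dl (g : Fin m → (Fin n → Bool) → Bool) (i : Fin n) (v : Fin m → Bool) : ℝ :=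
  (Nc g i true v : ℝ) - (Nc g i false v : ℝ)

lemma sumF (g : Fin m → (Fin n → Bool) → Bool) (i : Fin n) (b : Bool) (F : (Fin m → Bool) → ℝ) :
    ∑ v : Fin m → Bool, F v * (Nc g i b v : ℝ)
      = ∑ x ∈ univ.filter (fun x : Fin n → Bool => x i = b), F (Gv g x) := by
  classical
  have h1 : ∀ v : Fin m → Bool, F v * (Nc g i b v : ℝ)
      = ∑ x : Fin n → Bool, if x i = b ∧ Gv g x = v then F v else 0 := by
    intro v
    rw [Nc, card_filter]
    push_cast
    rw [Finset.mul_sum]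
    refine Finset.sum_congr rfl fun x _ => ?_
    by_cases hx : x i = b ∧ Gv g x = v <;> simp [hx]
  rw [Finset.sum_congr rfl fun v _ => h1 v, Finset.sum_comm, Finset.sum_filter]
  refine Finset.sum_congr rfl fun x _ => ?_
  by_cases hb : x i = b
  · simp only [hb, true_and, if_true]
    have h2 : ∀ v : Fin m → Bool,
        (if Gv g x = v then F v else 0) = (if v = Gv g x then F v else 0) := by
      intro v
      by_cases hv : v = Gv g x <;> simp [hv, eq_comm]
    rw [Finset.sum_congr rfl fun v _ => h2 v, Finset.sum_ite_eq' univ (Gv g x) F]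
    simp
  · simp [hb]

lemma flipBit_mem_aux (i : Fin n) (b : Bool) (x : Fin n → Bool) (hx : x i = b) :
    flipBit i x i = !b := by
  simp [flipBit, hx]

lemma flipBit_flipBit (i : Fin n) (x : Fin n → Bool) : flipBit i (flipBit i x) = x := by
  funext k
  simp only [flipBit, Function.update]
  by_cases hk : k = i <;> simp [hk]

lemma lemA (g : Fin m → (Fin n → Bool) → Bool) (h : (Fin m → Bool) → ℕ) (q : ℕ) (i : Fin n)
    (heq : ∀ x, hw n x = h (fun j => g j x))
    (hdep : Nat.card {j : Fin m // DependsOnCoord (g j) i} ≤ q) :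
    (2:ℝ) ^ n ≤ 2 ^ (q+1) * ∑ v : Fin m → Bool, |Dl g i v| := by
  classical
  set F : (Fin m → Bool) → ℝ := fun v => (Phi g h i v : ℝ) with hF
  have hsum : ∑ v : Fin m → Bool, F v * Dl g i v
      = (∑ x ∈ univ.filter (fun x : Fin n → Bool => x i = true), F (Gv g x))
        - ∑ x ∈ univ.filter (fun x : Fin n → Bool => x i = false), F (Gv g x) := by
    rw [← sumF g i true F, ← sumF g i false F, ← Finset.sum_sub_distrib]
    refine Finset.sum_congr rfl fun v _ => ?_
    rw [Dl]; ring
  have hpair : ∑ x ∈ univ.filter (fun x : Fin n → Bool => x i = true), F (Gv g x)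
      = ∑ x ∈ univ.filter (fun x : Fin n → Bool => x i = false), F (Gv g (flipBit i x)) := by
    refine Finset.sum_nbij' (flipBit i) (flipBit i) ?_ ?_ ?_ ?_ ?_
    · intro a ha
      simp only [mem_filter, mem_univ, true_and] at ha ⊢
      simp [flipBit_mem_aux i true a ha]
    · intro a ha
      simp only [mem_filter, mem_univ, true_and] at ha ⊢
      simp [flipBit_mem_aux i false a ha]
    · intro a _; exact flipBit_flipBit i a
    · intro a _; exact flipBit_flipBit i a
    · intro a _; rw [flipBit_flipBit i a]
  have hlower : ((univ.filter (fun x : Fin n → Bool => x i = false)).card : ℝ)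
      ≤ ∑ x ∈ univ.filter (fun x : Fin n → Bool => x i = false),
          (F (Gv g (flipBit i x)) - F (Gv g x)) := by
    have h1 : ∀ x ∈ univ.filter (fun x : Fin n → Bool => x i = false),
        (1:ℝ) ≤ F (Gv g (flipBit i x)) - F (Gv g x) := by
      intro x hx
      simp only [mem_filter, mem_univ, true_and] at hx
      have h2 := phi_step g h i heq x hx
      rw [hF]
      push_cast
      have h3 : ((Phi g h i (Gv g x) : ℝ) + 1) ≤ Phi g h i (Gv g (flipBit i x)) := by
        exact_mod_cast h2
      linarith
    calc ((univ.filter (fun x : Fin n → Bool => x i = false)).card : ℝ)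
        = ∑ _x ∈ univ.filter (fun x : Fin n → Bool => x i = false), (1:ℝ) := by
          rw [Finset.sum_const, nsmul_eq_mul, mul_one]
      _ ≤ _ := Finset.sum_le_sum h1
  have hupper : ∑ v : Fin m → Bool, F v * Dl g i v
      ≤ (2:ℝ) ^ q * ∑ v : Fin m → Bool, |Dl g i v| := by
    rw [Finset.mul_sum]
    refine Finset.sum_le_sum fun v _ => ?_
    have h1 : F v * Dl g i v ≤ F v * |Dl g i v| :=
      mul_le_mul_of_nonneg_left (le_abs_self _) (by positivity)
    have h2 : F v ≤ (2:ℝ) ^ q := by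
      show ((Phi g h i v : ℝ)) ≤ (2:ℝ) ^ q
      exact_mod_cast phi_le g h i q hdep v
    nlinarith [abs_nonneg (Dl g i v)]
  have hcard : 2 * ((univ.filter (fun x : Fin n → Bool => x i = false)).card : ℝ) = 2 ^ n := by
    have h1 : (univ.filter (fun x : Fin n → Bool => x i = false)).card
        = (univ.filter (fun x : Fin n → Bool => x i = true)).card := by
      refine Finset.card_nbij' (flipBit i) (flipBit i) ?_ ?_ ?_ ?_
      · intro a ha
        simp only [mem_coe, mem_filter, mem_univ, true_and] at ha ⊢
        simp [flipBit_mem_aux i false a ha]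
      · intro a ha
        simp only [mem_coe, mem_filter, mem_univ, true_and] at ha ⊢
        simp [flipBit_mem_aux i true a ha]
      · intro a _; exact flipBit_flipBit i a
      · intro a _; exact flipBit_flipBit i a
    have h2 : (univ.filter (fun x : Fin n → Bool => x i = true)).card
        + (univ.filter (fun x : Fin n → Bool => x i = false)).card
        = (univ : Finset (Fin n → Bool)).card := by
      have h2' := Finset.card_filter_add_card_filter_not
        (s := (univ : Finset (Fin n → Bool))) (p := fun x : Fin n → Bool => x i = true)
      have h2'' : (univ.filter (fun x : Fin n → Bool => ¬ (x i = true)))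
          = (univ.filter (fun x : Fin n → Bool => x i = false)) := by
        apply Finset.filter_congr
        intro x _
        simp
      rw [h2''] at h2'
      exact h2'
    have h3 : ((univ : Finset (Fin n → Bool)).card : ℝ) = 2 ^ n := by
      rw [Finset.card_univ]
      simp
    rw [← h3, ← h2, h1]
    push_cast
    ring
  have hchain : ((univ.filter (fun x : Fin n → Bool => x i = false)).card : ℝ)
      ≤ (2:ℝ) ^ q * ∑ v : Fin m → Bool, |Dl g i v| := by
    calc ((univ.filter (fun x : Fin n → Bool => x i = false)).card : ℝ)
        ≤ ∑ x ∈ univ.filter (fun x : Fin n → Bool => x i = false),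
            (F (Gv g (flipBit i x)) - F (Gv g x)) := hlower
      _ = ∑ v : Fin m → Bool, F v * Dl g i v := by
          rw [hsum, hpair, Finset.sum_sub_distrib]
      _ ≤ _ := hupper
  calc (2:ℝ) ^ n = 2 * ((univ.filter (fun x : Fin n → Bool => x i = false)).card : ℝ) :=
        hcard.symm
    _ ≤ 2 * ((2:ℝ) ^ q * ∑ v : Fin m → Bool, |Dl g i v|) := by linarith
    _ = 2 ^ (q+1) * ∑ v : Fin m → Bool, |Dl g i v| := by ring

lemma cosh_bd {lam : ℝ} (h0 : 0 < lam) (h1 : lam ≤ 1) :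
    Real.exp lam + Real.exp (-lam) ≤ 2 + 2 * lam ^ 2 := by
  have hab : |lam| ≤ 1 := by rw [abs_of_pos h0]; exact h1
  have hab' : |(-lam)| ≤ 1 := by rwa [abs_neg]
  have e1 := Real.exp_bound hab (n := 2) (by norm_num)
  have e2 := Real.exp_bound hab' (n := 2) (by norm_num)
  have hs1 : ∑ i ∈ Finset.range 2, lam ^ i / (i.factorial : ℝ) = 1 + lam := by
    simp [Finset.sum_range_succ, Nat.factorial]
  have hs2 : ∑ i ∈ Finset.range 2, (-lam) ^ i / (i.factorial : ℝ) = 1 - lam := by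
    simp [Finset.sum_range_succ, Nat.factorial]
    ring
  rw [hs1] at e1
  rw [hs2] at e2
  rw [abs_of_pos h0] at e1
  rw [abs_neg, abs_of_pos h0] at e2
  norm_num [Nat.factorial] at e1 e2
  have b1 := (abs_le.mp e1).2
  have b2 := (abs_le.mp e2).2
  nlinarith
  
lemma lemB (g : Fin m → (Fin n → Bool) → Bool) (lam : ℝ) (hl : 0 < lam) (hl1 : lam ≤ 1) :
    ∑ i : Fin n, ∑ v : Fin m → Bool, |Dl g i v|
      ≤ lam⁻¹ * 2 ^ n * ((m : ℝ) * Real.log 2 + (n : ℝ) * lam ^ 2) := by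
  classical
  set zeta : Fin n → (Fin m → Bool) → ℝ := fun i v => if 0 ≤ Dl g i v then 1 else -1 with hzeta
  set sig : (Fin n → Bool) → Fin n → ℝ := fun x i => if x i = true then 1 else -1 with hsig
  have hz1 : ∀ i v, zeta i v = 1 ∨ zeta i v = -1 := by
    intro i v
    by_cases hd : 0 ≤ Dl g i v
    · left; simp [hzeta, hd]
    · right; simp [hzeta, hd]
  -- step 0: |Dl| = zeta * Dl
  have habs : ∀ (i : Fin n) (v : Fin m → Bool), |Dl g i v| = zeta i v * Dl g i v := by
    intro i v
    by_cases hd : 0 ≤ Dl g i v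
    · simp [hzeta, hd, abs_of_nonneg hd]
    · push_neg at hd
      simp [hzeta, not_le.mpr hd, abs_of_neg hd]
  -- step 1
  have hstep1 : ∀ i : Fin n, ∑ v : Fin m → Bool, |Dl g i v|
      = ∑ x : Fin n → Bool, zeta i (Gv g x) * sig x i := by
    intro i
    have e1 : ∑ v : Fin m → Bool, |Dl g i v|
        = (∑ x ∈ univ.filter (fun x : Fin n → Bool => x i = true), zeta i (Gv g x))
          - ∑ x ∈ univ.filter (fun x : Fin n → Bool => x i = false), zeta i (Gv g x) := by
      rw [Finset.sum_congr rfl fun v _ => habs i v]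
      have : ∀ v : Fin m → Bool, zeta i v * Dl g i v
          = zeta i v * (Nc g i true v : ℝ) - zeta i v * (Nc g i false v : ℝ) := by
        intro v; rw [Dl]; ring
      rw [Finset.sum_congr rfl fun v _ => this v, Finset.sum_sub_distrib,
        sumF g i true (zeta i), sumF g i false (zeta i)]
    have e2 : ∑ x : Fin n → Bool, zeta i (Gv g x) * sig x i
        = (∑ x ∈ univ.filter (fun x : Fin n → Bool => x i = true), zeta i (Gv g x) * sig x i)
          + ∑ x ∈ univ.filter (fun x : Fin n → Bool => ¬ (x i = true)), zeta i (Gv g x) * sig x i :=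
      (Finset.sum_filter_add_sum_filter_not univ _ _).symm
    have e3 : ∑ x ∈ univ.filter (fun x : Fin n → Bool => x i = true), zeta i (Gv g x) * sig x i
        = ∑ x ∈ univ.filter (fun x : Fin n → Bool => x i = true), zeta i (Gv g x) := by
      refine Finset.sum_congr rfl fun x hx => ?_
      have hxi := (mem_filter.mp hx).2
      simp [hsig, hxi]
    have e4 : ∑ x ∈ univ.filter (fun x : Fin n → Bool => ¬ (x i = true)), zeta i (Gv g x) * sig x i
        = -∑ x ∈ univ.filter (fun x : Fin n → Bool => x i = false), zeta i (Gv g x) := by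
      have hfe : (univ.filter (fun x : Fin n → Bool => ¬ (x i = true)))
          = (univ.filter (fun x : Fin n → Bool => x i = false)) := by
        apply Finset.filter_congr; intro x _; simp
      rw [hfe, ← Finset.sum_neg_distrib]
      refine Finset.sum_congr rfl fun x hx => ?_
      have hxi := (mem_filter.mp hx).2
      simp [hsig, hxi]
    rw [e1, e2, e3, e4]
    ring
  -- the partition function
  set S : (Fin n → Bool) → ℝ :=
    fun x => ∑ v : Fin m → Bool, Real.exp (lam * ∑ i : Fin n, zeta i v * sig x i) with hS
  have hSpos : ∀ x, 0 < S x := by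
    intro x
    refine Finset.sum_pos (f := fun v : Fin m → Bool => Real.exp (lam * ∑ i : Fin n, zeta i v * sig x i)) (fun v _ => (Real.exp_pos _)) ⟨Gv g x, mem_univ _⟩
  -- step 2: pointwise bound
  have hstep2 : ∀ x : Fin n → Bool,
      lam * ∑ i : Fin n, zeta i (Gv g x) * sig x i ≤ Real.log (S x) := by
    intro x
    have h1 : Real.exp (lam * ∑ i : Fin n, zeta i (Gv g x) * sig x i) ≤ S x :=
      Finset.single_le_sum (f := fun v : Fin m → Bool => Real.exp (lam * ∑ i : Fin n, zeta i v * sig x i)) (fun v _ => (Real.exp_pos _).le) (mem_univ (Gv g x))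
    have h2 := Real.log_le_log (Real.exp_pos _) h1
    rwa [Real.log_exp] at h2
  -- step 3: sum of partition functions
  have hstep3 : ∑ x : Fin n → Bool, S x
      = (2:ℝ) ^ m * (Real.exp lam + Real.exp (-lam)) ^ n := by
    rw [hS]
    rw [Finset.sum_comm]
    have hv : ∀ v : Fin m → Bool,
        ∑ x : Fin n → Bool, Real.exp (lam * ∑ i : Fin n, zeta i v * sig x i)
          = (Real.exp lam + Real.exp (-lam)) ^ n := by
      intro v
      have h1 : ∀ x : Fin n → Bool, Real.exp (lam * ∑ i : Fin n, zeta i v * sig x i)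
          = ∏ i : Fin n, Real.exp (lam * zeta i v * (if x i = true then 1 else -1)) := by
        intro x
        rw [Finset.mul_sum, Real.exp_sum]
        refine Finset.prod_congr rfl fun i _ => ?_
        rw [hsig]
        ring_nf
      rw [Finset.sum_congr rfl fun x _ => h1 x]
      have h2 : ∑ x : Fin n → Bool,
          ∏ i : Fin n, Real.exp (lam * zeta i v * (if x i = true then 1 else -1))
            = ∏ i : Fin n, ∑ b : Bool, Real.exp (lam * zeta i v * (if b = true then 1 else -1)) := by
        rw [Finset.prod_univ_sum (fun _ : Fin n => (univ : Finset Bool))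
          (fun i b => Real.exp (lam * zeta i v * (if b = true then 1 else -1))),
          Fintype.piFinset_univ]
      have h3 : ∀ i : Fin n, ∑ b : Bool, Real.exp (lam * zeta i v * (if b = true then 1 else -1))
          = Real.exp lam + Real.exp (-lam) := by
        intro i
        rw [Fintype.sum_bool]
        rcases hz1 i v with hz | hz <;> rw [hz]
        · simp
        · simp [add_comm]
      rw [h2, Finset.prod_congr rfl fun i _ => h3 i, Finset.prod_const, Finset.card_univ,
        Fintype.card_fin]
    rw [Finset.sum_congr rfl fun v _ => hv v, Finset.sum_const, Finset.card_univ]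
    simp [nsmul_eq_mul]
  -- step 4 and 5
  set E : ℝ := Real.exp lam + Real.exp (-lam) with hE
  have hEpos : 0 < E := by positivity
  set K : ℝ := (2:ℝ) ^ m * (E / 2) ^ n with hK
  have hKpos : 0 < K := by positivity
  have hsum_div : (∑ x : Fin n → Bool, S x) / K = 2 ^ n := by
    rw [hstep3, hK]
    rw [div_pow]
    field_simp
  have hstep4 : ∑ x : Fin n → Bool, Real.log (S x) ≤ 2 ^ n * Real.log K := by
    have h1 : ∀ x : Fin n → Bool, Real.log (S x) ≤ Real.log K + (S x / K - 1) := by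
      intro x
      have h2 : Real.log (S x / K) ≤ S x / K - 1 :=
        Real.log_le_sub_one_of_pos (div_pos (hSpos x) hKpos)
      rw [Real.log_div (hSpos x).ne' hKpos.ne'] at h2
      linarith
    have hcardO : ((univ : Finset (Fin n → Bool)).card : ℝ) = 2 ^ n := by
      rw [Finset.card_univ]
      simp
    calc ∑ x : Fin n → Bool, Real.log (S x)
        ≤ ∑ x : Fin n → Bool, (Real.log K + (S x / K - 1)) :=
          Finset.sum_le_sum fun x _ => h1 x
      _ = ((univ : Finset (Fin n → Bool)).card : ℝ) * Real.log K
          + ((∑ x : Fin n → Bool, S x) / K - ((univ : Finset (Fin n → Bool)).card : ℝ)) := by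
          rw [Finset.sum_add_distrib, Finset.sum_const, Finset.sum_sub_distrib,
            Finset.sum_const, ← Finset.sum_div]
          simp [nsmul_eq_mul]
      _ = 2 ^ n * Real.log K := by
          rw [hcardO, hsum_div]
          ring
  have hstep5 : Real.log K ≤ (m : ℝ) * Real.log 2 + (n : ℝ) * lam ^ 2 := by
    have h1 : Real.log K = (m : ℝ) * Real.log 2 + (n : ℝ) * Real.log (E / 2) := by
      rw [hK, Real.log_mul (by positivity) (by positivity), Real.log_pow, Real.log_pow]
    have h2 : E / 2 ≤ 1 + lam ^ 2 := by
      have := cosh_bd hl hl1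
      rw [hE]
      linarith
    have h3 : Real.log (E / 2) ≤ lam ^ 2 := by
      calc Real.log (E / 2) ≤ Real.log (1 + lam ^ 2) := Real.log_le_log (by positivity) h2
        _ ≤ (1 + lam ^ 2) - 1 := Real.log_le_sub_one_of_pos (by positivity)
        _ = lam ^ 2 := by ring
    rw [h1]
    have : (n : ℝ) * Real.log (E / 2) ≤ (n : ℝ) * lam ^ 2 :=
      mul_le_mul_of_nonneg_left h3 (Nat.cast_nonneg n)
    linarith
  -- final assembly
  have hT : ∑ i : Fin n, ∑ v : Fin m → Bool, |Dl g i v|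
      = ∑ x : Fin n → Bool, ∑ i : Fin n, zeta i (Gv g x) * sig x i := by
    rw [Finset.sum_congr rfl fun i (_ : i ∈ univ) => hstep1 i, Finset.sum_comm]
  have hlamT : lam * (∑ x : Fin n → Bool, ∑ i : Fin n, zeta i (Gv g x) * sig x i)
      ≤ 2 ^ n * ((m : ℝ) * Real.log 2 + (n : ℝ) * lam ^ 2) := by
    calc lam * (∑ x : Fin n → Bool, ∑ i : Fin n, zeta i (Gv g x) * sig x i)
        = ∑ x : Fin n → Bool, lam * ∑ i : Fin n, zeta i (Gv g x) * sig x i := by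
          rw [Finset.mul_sum]
      _ ≤ ∑ x : Fin n → Bool, Real.log (S x) := Finset.sum_le_sum fun x _ => hstep2 x
      _ ≤ 2 ^ n * Real.log K := hstep4
      _ ≤ 2 ^ n * ((m : ℝ) * Real.log 2 + (n : ℝ) * lam ^ 2) :=
          mul_le_mul_of_nonneg_left hstep5 (by positivity)
  rw [hT]
  have h6 : lam⁻¹ * (lam * (∑ x : Fin n → Bool, ∑ i : Fin n, zeta i (Gv g x) * sig x i))
      ≤ lam⁻¹ * (2 ^ n * ((m : ℝ) * Real.log 2 + (n : ℝ) * lam ^ 2)) :=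
    mul_le_mul_of_nonneg_left hlamT (inv_nonneg.mpr hl.le)
  rw [← mul_assoc, inv_mul_cancel₀ hl.ne', one_mul, ← mul_assoc] at h6
  exact h6

end


/-- If `HW_n = h(g_1, …, g_m)` and every coordinate is queried by at most `q` of the inner
functions, then `m ≥ n ⬝ 2^{-O(q)}`. -/
theorem hw_count_lower_bound :
    ∃ C : ℝ, 0 < C ∧
      ∀ (n m q : ℕ) (g : Fin m → (Fin n → Bool) → Bool) (h : (Fin m → Bool) → ℕ),
        (∀ x, hw n x = h (fun j => g j x)) →
        (∀ i : Fin n, Nat.card {j : Fin m // DependsOnCoord (g j) i} ≤ q) →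
        (n : ℝ) * (2 : ℝ) ^ (-(C * (q : ℝ))) ≤ (m : ℝ) := by
  classical
  refine ⟨6, by norm_num, ?_⟩
  intro n m q g h heq hdep
  rcases Nat.eq_zero_or_pos n with hn0 | hn
  · subst hn0
    simp
  rcases Nat.eq_zero_or_pos q with hq0 | hq1
  · exfalso
    subst hq0
    set i0 : Fin n := ⟨0, hn⟩
    have hnone : ∀ j, ¬ DependsOnCoord (g j) i0 := by
      intro j hj
      have h1 := hdep i0
      haveI : Nonempty {j : Fin m // DependsOnCoord (g j) i0} := ⟨⟨j, hj⟩⟩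
      have h2 : 0 < Nat.card {j : Fin m // DependsOnCoord (g j) i0} := Nat.card_pos
      omega
    set x0 : Fin n → Bool := fun _ => false
    have h1 : hw n (flipBit i0 x0) = hw n x0 + 1 := hw_flip i0 x0 rfl
    have h2 : (fun j => g j (flipBit i0 x0)) = (fun j => g j x0) := by
      funext j
      exact not_dependsOn (hnone j) x0
    have h3 := heq (flipBit i0 x0)
    rw [h2, ← heq x0] at h3
    omega
  -- main case : q ≥ 1
  set a : ℝ := (2:ℝ) ^ q with ha
  have ha0 : (0:ℝ) < a := by positivity
  set lam : ℝ := ((2:ℝ) ^ (q+2))⁻¹ with hlam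
  have hpow : (2:ℝ) ^ (q+2) = a * 4 := by
    rw [pow_add, ha]
    norm_num
  have hlam0 : 0 < lam := by positivity
  have hlam1 : lam ≤ 1 := by
    rw [hlam]
    have h1 : (1:ℝ) ≤ (2:ℝ) ^ (q+2) := one_le_pow₀ (by norm_num)
    exact inv_le_one_of_one_le₀ h1
  have hB := lemB g lam hlam0 hlam1
  have hA : ∀ i : Fin n, (2:ℝ) ^ n ≤ 2 ^ (q+1) * ∑ v : Fin m → Bool, |Dl g i v| :=
    fun i => lemA g h q i heq (hdep i)
  have hsumA : (n:ℝ) * 2 ^ n ≤ 2 ^ (q+1) * ∑ i : Fin n, ∑ v : Fin m → Bool, |Dl g i v| := by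
    rw [Finset.mul_sum]
    calc (n:ℝ) * 2 ^ n = ∑ _i : Fin n, (2:ℝ) ^ n := by
          rw [Finset.sum_const, Finset.card_univ, Fintype.card_fin, nsmul_eq_mul]
      _ ≤ _ := Finset.sum_le_sum fun i _ => hA i
  set L : ℝ := Real.log 2 with hL
  have hL0 : 0 < L := Real.log_pos (by norm_num)
  have hL1 : L ≤ 1 := by
    calc L ≤ 2 - 1 := Real.log_le_sub_one_of_pos (by norm_num)
      _ = 1 := by norm_num
  have hchain : (n:ℝ) * 2 ^ n ≤ 2 ^ (q+1) * (lam⁻¹ * 2 ^ n * ((m : ℝ) * L + (n : ℝ) * lam ^ 2)) := by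
    refine le_trans hsumA (mul_le_mul_of_nonneg_left hB (by positivity))
  have hlaminv : lam⁻¹ = a * 4 := by
    rw [hlam, inv_inv, hpow]
  have hident : (2:ℝ) ^ (q+1) * (lam⁻¹ * 2 ^ n * ((m : ℝ) * L + (n : ℝ) * lam ^ 2))
      = (2:ℝ) ^ n * (8 * a ^ 2 * (m : ℝ) * L + (n : ℝ) / 2) := by
    rw [hlaminv, hlam, hpow]
    have h4 : (2:ℝ) ^ (q+1) = 2 * a := by rw [pow_add, ha]; ring
    rw [h4]
    field_simp
    ring
  rw [hident] at hchain
  have hstep : (n:ℝ) ≤ 8 * a ^ 2 * (m : ℝ) * L + (n : ℝ) / 2 := by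
    have h5 : 0 < (2:ℝ) ^ n := by positivity
    rw [mul_comm ((2:ℝ) ^ n) _] at hchain
    exact le_of_mul_le_mul_right hchain h5
  have hfin : (n:ℝ) ≤ 16 * a ^ 2 * (m : ℝ) := by
    have h6 : 8 * a ^ 2 * (m : ℝ) * L ≤ 8 * a ^ 2 * (m : ℝ) := by
      have hm0 : (0:ℝ) ≤ 8 * a ^ 2 * (m : ℝ) := by positivity
      nlinarith
    nlinarith
  have h2q : (16:ℝ) * a ^ 2 ≤ 2 ^ (6*q) := by
    have h7 : (16:ℝ) * a ^ 2 = 2 ^ (2*q+4) := by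
      rw [ha, ← pow_mul, pow_add, mul_comm q 2]
      norm_num
      ring
    rw [h7]
    exact pow_le_pow_right₀ (by norm_num) (by omega)
  have hfin2 : (n:ℝ) ≤ 2 ^ (6*q) * (m : ℝ) := by
    calc (n:ℝ) ≤ 16 * a ^ 2 * (m : ℝ) := hfin
      _ ≤ 2 ^ (6*q) * (m : ℝ) := mul_le_mul_of_nonneg_right h2q (Nat.cast_nonneg m)
  have hrpow : (2:ℝ) ^ (-((6:ℝ) * (q:ℝ))) = ((2:ℝ) ^ (6*q : ℕ))⁻¹ := by
    rw [← Real.rpow_natCast 2 (6*q), ← Real.rpow_neg (by norm_num)]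
    push_cast
    ring_nf
  rw [hrpow]
  rw [← div_eq_mul_inv, div_le_iff₀ (by positivity)]
  calc (n:ℝ) ≤ 2 ^ (6*q) * (m : ℝ) := hfin2
    _ = (m:ℝ) * 2 ^ (6*q) := by ring
end

section
/- (Baby version of the key lemma) Suppose HW_n(x) = h(g_1(x), …, g_m(x)) for all x ∈ {0,1}^n, where g_1, …, g_m : {0,1}^n → {0,1} and h : {0,1}^m → {0, …, n}, and suppose exactly one of the inner functions g_1, …, g_m depends on coordinate i. Then the values g_1(x), …, g_m(x) determine x_i completely: there is a function φ : {0,1}^m → {0,1} with φ(g_1(x), …, g_m(x)) = x_i for all x ∈ {0,1}^n. Equivalently, for X uniformly distributed on {0,1}^n, I[X_i : (g_1(X), …, g_m(X))] = 1. -/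
lemma flipBit_apply_self {n} (i : Fin n) (x) : flipBit i x i = !x i := by
  simp [flipBit]

lemma flipBit_apply_ne {n} (i j : Fin n) (x) (hj : j ≠ i) : flipBit i x j = x j := by
  simp [flipBit, Function.update_of_ne hj]

lemma hw_flip_true {n} (i : Fin n) (x) (hx : x i = true) :
    hw n (flipBit i x) + 1 = hw n x := by
  have hmem : i ∈ Finset.univ.filter (fun j => x j = true) := by simp [hx]
  have hset : Finset.univ.filter (fun j => flipBit i x j = true)
      = (Finset.univ.filter (fun j => x j = true)).erase i := by
    ext j
    by_cases hj : j = i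
    · subst hj; simp [flipBit_apply_self, hx]
    · simp [flipBit_apply_ne i j x hj, hj]
  have : hw n (flipBit i x) = hw n x - 1 := by
    rw [hw, hset, Finset.card_erase_of_mem hmem]; rfl
  have hpos : 1 ≤ hw n x := Finset.card_pos.mpr ⟨i, hmem⟩
  omega

lemma hw_flip_false {n} (i : Fin n) (x) (hx : x i = false) :
    hw n (flipBit i x) = hw n x + 1 := by
  have hmem : i ∉ Finset.univ.filter (fun j => x j = true) := by simp [hx]
  have hset : Finset.univ.filter (fun j => flipBit i x j = true)
      = insert i (Finset.univ.filter (fun j => x j = true)) := by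
    ext j
    by_cases hj : j = i
    · subst hj; simp [flipBit_apply_self, hx]
    · simp [flipBit_apply_ne i j x hj, hj]
  rw [hw, hset, Finset.card_insert_of_notMem hmem]; rfl

lemma hw_flip_ne {n} (i : Fin n) (x) : hw n (flipBit i x) ≠ hw n x := by
  cases hx : x i
  · have := hw_flip_false i x hx; omega
  · have := hw_flip_true i x hx; omega

lemma bool_helper : ∀ a b c d : Bool, a ≠ c → b ≠ d → a = b → c = d := by decide

lemma key_det (n m : ℕ) (i : Fin n)
    (g : Fin m → (Fin n → Bool) → Bool) (h : (Fin m → Bool) → ℕ)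
    (hcomp : ∀ x, hw n x = h (fun j => g j x))
    (hone : Nat.card {j : Fin m // DependsOnCoord (g j) i} = 1) :
    ∀ x y, (∀ j, g j x = g j y) → x i = y i := by
  rw [Nat.card_eq_one_iff_unique] at hone
  obtain ⟨hsub, ⟨⟨j0, hj0⟩⟩⟩ := hone
  have huniq : ∀ j, DependsOnCoord (g j) i → j = j0 := fun j hj => by
    have := hsub.elim ⟨j, hj⟩ ⟨j0, hj0⟩
    exact congrArg Subtype.val this
  have hinv : ∀ j, j ≠ j0 → ∀ x, g j (flipBit i x) = g j x := by
    intro j hj x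
    by_contra hne
    exact hj (huniq j ⟨x, fun e => hne e.symm⟩)
  have hflip : ∀ x, g j0 x ≠ g j0 (flipBit i x) := by
    intro x heq
    have htup : (fun j => g j x) = (fun j => g j (flipBit i x)) := by
      funext j
      by_cases hj : j = j0
      · subst hj; exact heq
      · exact (hinv j hj x).symm
    have : hw n x = hw n (flipBit i x) := by
      rw [hcomp, hcomp, htup]
    exact hw_flip_ne i x this.symm
  intro x y hxy
  by_contra hne
  have htupflip : (fun j => g j (flipBit i x)) = (fun j => g j (flipBit i y)) := by
    funext j
    by_cases hj : j = j0
    · subst hj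
      exact bool_helper _ _ _ _ (hflip x) (hflip y) (hxy _)
    · rw [hinv j hj x, hinv j hj y, hxy j]
  have htup : (fun j => g j x) = (fun j => g j y) := funext hxy
  have h1 : hw n x = hw n y := by rw [hcomp, hcomp, htup]
  have h2 : hw n (flipBit i x) = hw n (flipBit i y) := by rw [hcomp, hcomp, htupflip]
  cases hx : x i <;> cases hy : y i
  · exact hne (hx.trans hy.symm)
  · have := hw_flip_false i x hx
    have := hw_flip_true i y hy
    omega
  · have := hw_flip_true i x hx
    have := hw_flip_false i y hy
    omega
  · exact hne (hx.trans hy.symm)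

lemma card_half (n : ℕ) (i : Fin n) (a : Bool) :
    (Finset.univ.filter (fun x : Fin n → Bool => x i = a)).card * 2 = 2 ^ n := by
  have hbij : (Finset.univ.filter (fun x : Fin n → Bool => x i = a)).card
      = (Finset.univ.filter (fun x : Fin n → Bool => ¬ x i = a)).card := by
    apply Finset.card_bij' (fun x _ => flipBit i x) (fun x _ => flipBit i x)
    · intro x hx
      simp only [Finset.mem_filter, Finset.mem_univ, true_and] at hx ⊢
      simp [flipBit, hx]
    · intro x hx
      simp only [Finset.mem_filter, Finset.mem_univ, true_and] at hx ⊢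
      simp [flipBit]
      cases a <;> cases hxv : x i <;> simp_all
    · intro x _
      funext j
      by_cases hj : j = i
      · subst hj; simp [flipBit]
      · simp [flipBit, Function.update_of_ne hj]
    · intro x _
      funext j
      by_cases hj : j = i
      · subst hj; simp [flipBit]
      · simp [flipBit, Function.update_of_ne hj]
  have hsum := Finset.card_filter_add_card_filter_not
    (s := (Finset.univ : Finset (Fin n → Bool))) (p := fun x => x i = a)
  rw [Finset.card_univ] at hsum
  simp only [Fintype.card_fun, Fintype.card_fin, Fintype.card_bool] at hsum
  rw [← hbij] at hsum
  rw [mul_two]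
  exact hsum

/-- Baby version of the key lemma: if `HW_n = h(g_1, …, g_m)` and exactly one inner function
depends on coordinate `i`, then the values `g_1(x), …, g_m(x)` determine `x_i` completely;
equivalently, for `X` uniform on `{0,1}^n`, `I[X_i : (g_1(X), …, g_m(X))] = 1`. -/
theorem baby_key_lemma (n m : ℕ) (i : Fin n)
    (g : Fin m → (Fin n → Bool) → Bool) (h : (Fin m → Bool) → ℕ)
    (hcomp : ∀ x, hw n x = h (fun j => g j x))
    (hone : Nat.card {j : Fin m // DependsOnCoord (g j) i} = 1) :
    (∃ φ : (Fin m → Bool) → Bool, ∀ x, φ (fun j => g j x) = x i) ∧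
    mutInfoU (Finset.univ : Finset (Fin n → Bool))
      (fun x => x i) (fun x => (fun j => g j x)) = 1 := by
  classical
  have hkey := key_det n m i g h hcomp hone
  set φ : (Fin m → Bool) → Bool := fun b =>
    if hb : ∃ x, (fun j => g j x) = b then (Classical.choose hb) i else false with hφdef
  have hφ : ∀ x, φ (fun j => g j x) = x i := by
    intro x
    have hb : ∃ y, (fun j : Fin m => g j y) = (fun j => g j x) := ⟨x, rfl⟩
    simp only [hφdef, dif_pos hb]
    exact hkey _ x (fun j => congrFun (Classical.choose_spec hb) j)
  refine ⟨⟨φ, hφ⟩, ?_⟩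
  have hcard : ((Finset.univ : Finset (Fin n → Bool)).card : ℝ) = 2 ^ n := by
    rw [Finset.card_univ]
    simp
  have hterm : ∀ a : Bool,
      (((Finset.univ.filter (fun x : Fin n → Bool => x i = a)).card : ℝ)
        / ((Finset.univ : Finset (Fin n → Bool)).card : ℝ)) = 1 / 2 := by
    intro a
    have hc := card_half n i a
    have hc' : ((Finset.univ.filter (fun x : Fin n → Bool => x i = a)).card : ℝ) * 2
        = 2 ^ n := by exact_mod_cast congrArg (Nat.cast (R := ℝ)) hc
    rw [hcard]
    have hpow : (0:ℝ) < 2 ^ n := by positivity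
    field_simp
    linarith
  have hent : entU (Finset.univ : Finset (Fin n → Bool)) (fun x => x i) = 1 := by
    rw [entU, Fintype.sum_bool]
    rw [hterm true, hterm false]
    norm_num
  have hcond : condEntU (Finset.univ : Finset (Fin n → Bool))
      (fun x => x i) (fun x => (fun j => g j x)) = 0 := by
    rw [condEntU]
    apply Finset.sum_eq_zero
    intro a _
    apply Finset.sum_eq_zero
    intro b _
    by_cases hne : (Finset.univ.filter
        (fun ω : Fin n → Bool => ω i = a ∧ (fun j => g j ω) = b)).Nonempty
    · obtain ⟨ω0, hω0⟩ := hne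
      simp only [Finset.mem_filter, Finset.mem_univ, true_and] at hω0
      obtain ⟨hA, hB⟩ := hω0
      have hset : Finset.univ.filter (fun ω : Fin n → Bool => (fun j => g j ω) = b)
          = Finset.univ.filter (fun ω : Fin n → Bool => ω i = a ∧ (fun j => g j ω) = b) := by
        ext ω
        simp only [Finset.mem_filter, Finset.mem_univ, true_and]
        constructor
        · intro hb
          refine ⟨?_, hb⟩
          have heq : ∀ j, g j ω = g j ω0 := fun j => by
            rw [congrFun hb j, congrFun hB j]
          rw [hkey ω ω0 heq, hA]
        · exact And.right
      have hpos : (0:ℝ) < ((Finset.univ.filter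
          (fun ω : Fin n → Bool => ω i = a ∧ (fun j => g j ω) = b)).card : ℝ) := by
        have : 0 < (Finset.univ.filter
            (fun ω : Fin n → Bool => ω i = a ∧ (fun j => g j ω) = b)).card :=
          Finset.card_pos.mpr ⟨ω0, by simp [hA, hB]⟩
        exact_mod_cast this
      rw [hset, div_self (ne_of_gt hpos), Real.logb_one, mul_zero]
    · rw [Finset.not_nonempty_iff_eq_empty] at hne
      rw [hne]
      simp
  rw [mutInfoU, hent, hcond]
  norm_num
end
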